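/- With μ_p as above (the law of x ↦ 1[⟨x,z⟩ + η = 0] with z ∼ Bernoulli(p)^⊗ℕ, η uniform on 𝔽₂ independent), for every N ≥ 1 and ε > 0 there exists p > 0 such that μ_p{ω : ω|_{𝔽₂^N} ≡ 0} ≥ 1/2 − ε and μ_p{ω : ω|_{𝔽₂^N} ≡ 1} ≥ 1/2 − ε. In particular μ_p → (1/2)δ_𝟘 + (1/2)δ_𝟙 weakly as p → 0⁺, where δ_𝟘, δ_𝟙 are the point masses at the constant-0 and constant-1 configurations in {0,1}^(𝔽₂^(⊕ℕ)). -/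

import Mathlib

open MeasureTheory Filter

/-- The pairing `⟨x,z⟩ = ∑ᵢ xᵢzᵢ` (a finite sum since `x` is finitely supported). -/
def cubePair (x : ℕ →₀ ZMod 2) (z : ℕ → ZMod 2) : ZMod 2 :=
  ∑ i ∈ x.support, x i * z i

/-- `ν` is the product Bernoulli(`p`) measure on `𝔽₂^ℕ`. -/
def IsBernoulliProduct (p : ℝ) (ν : Measure (ℕ → ZMod 2)) : Prop :=
  IsProbabilityMeasure ν ∧
    ∀ (s : Finset ℕ) (f : ℕ → ZMod 2),
      ν {z | ∀ i ∈ s, z i = f i} =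
        ∏ i ∈ s, if f i = 1 then ENNReal.ofReal p else ENNReal.ofReal (1 - p)

/-- The law of `x ↦ 1[⟨x,z⟩ + η = 0]` with `z ∼ ν` and `η` uniform on `𝔽₂`
independent of `z`. -/
noncomputable def hyperplaneLaw (ν : Measure (ℕ → ZMod 2)) :
    Measure ((ℕ →₀ ZMod 2) → Bool) :=
  Measure.map
    (fun p : (ℕ → ZMod 2) × ZMod 2 =>
      fun x : ℕ →₀ ZMod 2 => decide (cubePair x p.1 + p.2 = 0))
    (ν.prod (PMF.uniformOfFintype (ZMod 2)).toMeasure)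

/-!
If `z` vanishes on the first `N` coordinates then `⟨x, z⟩ = 0` for every `x ∈ 𝔽₂^N`, so the
configuration is constant on `𝔽₂^N`, with value `1[η = 0]`, a fair coin independent of `z`.
This happens with probability `(1 - p)^N → 1`, which gives the mass bounds `(1 - p)^N / 2`.
A continuous `f` is nearly constant on the configurations that are constant on `𝔽₂^N` for
large `N`, so `∫ f dμ_p` is within `ε + 2‖f‖ (1 - (1 - p)^N)` of `(f 𝟘 + f 𝟙) / 2`.
-/

open Topology

lemma norm_integral_le_of_norm_le_const_on_of_norm_le_const {α E : Type*} [MeasurableSpace α]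
    [NormedAddCommGroup E] [NormedSpace ℝ E] {μ : Measure α} [IsFiniteMeasure μ] {h : α → E}
    {s : Set α} {ε M : ℝ} (hs : MeasurableSet s) (hh : AEStronglyMeasurable h μ)
    (hε : ∀ x ∈ s, ‖h x‖ ≤ ε) (hM : ∀ x, ‖h x‖ ≤ M) :
    ‖∫ x, h x ∂μ‖ ≤ ε * μ.real s + M * μ.real sᶜ := by
  rw [← integral_add_compl hs (Integrable.of_bound hh M (ae_of_all _ hM))]
  exact (norm_add_le _ _).trans (add_le_add
    (norm_setIntegral_le_of_norm_le_const (measure_lt_top μ s) hε)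
    (norm_setIntegral_le_of_norm_le_const (measure_lt_top μ _) fun x _ => hM x))

def constOnSubcube (N : ℕ) (b : Bool) : Set ((ℕ →₀ ZMod 2) → Bool) :=
  {ω | ∀ x : ℕ →₀ ZMod 2, (∀ i ≥ N, x i = 0) → ω x = b}

def hyperplaneConfig (q : (ℕ → ZMod 2) × ZMod 2) : (ℕ →₀ ZMod 2) → Bool :=
  fun x => decide (cubePair x q.1 + q.2 = 0)

lemma cubePair_eq_zero {N : ℕ} {x : ℕ →₀ ZMod 2} {z : ℕ → ZMod 2}
    (hx : ∀ i ≥ N, x i = 0) (hz : ∀ i < N, z i = 0) : cubePair x z = 0 :=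
  Finset.sum_eq_zero fun i _ => by
    rcases lt_or_ge i N with hi | hi
    · rw [hz i hi, mul_zero]
    · rw [hx i hi, zero_mul]

lemma hyperplaneConfig_mem_constOnSubcube {N : ℕ} {z : ℕ → ZMod 2} (hz : ∀ i < N, z i = 0)
    (η : ZMod 2) : hyperplaneConfig (z, η) ∈ constOnSubcube N (decide (η = 0)) :=
  fun _ hx => by simp only [hyperplaneConfig, cubePair_eq_zero hx hz, zero_add]

lemma measurable_hyperplaneConfig : Measurable hyperplaneConfig := by
  refine measurable_pi_lambda _ fun x => ?_
  have hpair : Measurable fun q : (ℕ → ZMod 2) × ZMod 2 => cubePair x q.1 :=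
    Finset.measurable_sum _ fun i _ =>
      (measurable_of_countable (x i * ·)).comp ((measurable_pi_apply i).comp measurable_fst)
  exact (measurable_of_countable fun c : ZMod 2 => decide (c = 0)).comp
    (hpair.add measurable_snd)

lemma hyperplaneLaw_eq_map (ν : Measure (ℕ → ZMod 2)) :
    hyperplaneLaw ν = (ν.prod (PMF.uniformOfFintype (ZMod 2)).toMeasure).map hyperplaneConfig :=
  rfl

lemma measurableSet_constOnSubcube (N : ℕ) (b : Bool) : MeasurableSet (constOnSubcube N b) := by
  have : constOnSubcube N b = ⋂ x ∈ {x : ℕ →₀ ZMod 2 | ∀ i ≥ N, x i = 0}, (· x) ⁻¹' {b} := by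
    ext; simp [constOnSubcube]
  rw [this]
  exact .biInter (Set.to_countable _) fun x _ => measurable_pi_apply x (measurableSet_singleton b)

lemma eventually_constOnSubcube_subset {b : Bool} {s : Set ((ℕ →₀ ZMod 2) → Bool)}
    (hs : s ∈ 𝓝 fun _ => b) : ∀ᶠ N in atTop, constOnSubcube N b ⊆ s := by
  rw [nhds_pi, Filter.mem_pi] at hs
  obtain ⟨I, hI, t, ht, hIt⟩ := hs
  obtain ⟨N₀, hN₀⟩ := (hI.image fun x : ℕ →₀ ZMod 2 => x.support.sup Nat.succ).bddAbove
  refine eventually_atTop.2 ⟨N₀, fun N hN ω hω => hIt fun x hxI => ?_⟩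
  have hx : ∀ i ≥ N, x i = 0 := fun i hi => by
    by_contra hne
    have := (Finset.le_sup (f := Nat.succ) (Finsupp.mem_support_iff.2 hne)).trans
      (hN₀ ⟨x, hxI, rfl⟩)
    omega
  rw [hω x hx]
  exact mem_of_mem_nhds (ht x)

section

variable {p : ℝ} {ν : Measure (ℕ → ZMod 2)}

namespace IsBernoulliProduct

lemma le_one (hν : IsBernoulliProduct p ν) : p ≤ 1 := by
  have := hν.1
  have h := hν.2 {0} 1
  simp only [Finset.prod_singleton, Pi.one_apply, if_true] at h
  exact ENNReal.ofReal_le_one.1 (h ▸ prob_le_one)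

lemma measure_vanishing_below (hν : IsBernoulliProduct p ν) (N : ℕ) :
    ν {z | ∀ i < N, z i = 0} = ENNReal.ofReal ((1 - p) ^ N) := by
  have h := hν.2 (Finset.range N) 0
  simp only [Finset.mem_range, Pi.zero_apply, zero_ne_one, if_false, Finset.prod_const,
    Finset.card_range] at h
  rw [h, ENNReal.ofReal_pow (sub_nonneg.2 hν.le_one)]

end IsBernoulliProduct

lemma ofReal_le_hyperplaneLaw_constOnSubcube (hν : IsBernoulliProduct p ν) (N : ℕ) (b : Bool) :
    ENNReal.ofReal ((1 - p) ^ N / 2) ≤ hyperplaneLaw ν (constOnSubcube N b) := by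
  set η : ZMod 2 := if b then 0 else 1
  have hsub : {z | ∀ i < N, z i = 0} ×ˢ {η} ⊆ hyperplaneConfig ⁻¹' constOnSubcube N b := by
    rintro ⟨z, e⟩ ⟨hz, rfl⟩
    have := hyperplaneConfig_mem_constOnSubcube hz η
    cases b <;> exact this
  calc ENNReal.ofReal ((1 - p) ^ N / 2)
      = (ν.prod (PMF.uniformOfFintype (ZMod 2)).toMeasure) ({z | ∀ i < N, z i = 0} ×ˢ {η}) := by
        rw [Measure.prod_prod, hν.measure_vanishing_below,
          PMF.toMeasure_apply_singleton _ _ (measurableSet_singleton η),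
          ENNReal.ofReal_div_of_pos two_pos, ENNReal.ofReal_ofNat, div_eq_mul_inv]
        simp [PMF.uniformOfFintype_apply, ZMod.card]
    _ ≤ _ := measure_mono hsub
    _ = _ := (Measure.map_apply measurable_hyperplaneConfig
        (measurableSet_constOnSubcube N b)).symm

lemma dist_integral_hyperplaneLaw_le (hν : IsBernoulliProduct p ν)
    {f : ((ℕ →₀ ZMod 2) → Bool) → ℝ} (hfm : Measurable f) {C ε : ℝ} {N : ℕ} (hC : ∀ ω, ‖f ω‖ ≤ C)
    (hfN : ∀ b, ∀ ω ∈ constOnSubcube N b, dist (f ω) (f fun _ => b) ≤ ε) :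
    dist (∫ ω, f ω ∂hyperplaneLaw ν) ((f (fun _ => false) + f (fun _ => true)) / 2)
      ≤ ε + 2 * C * (1 - (1 - p) ^ N) := by
  have := hν.1
  set P := ν.prod (PMF.uniformOfFintype (ZMod 2)).toMeasure
  set G := {z : ℕ → ZMod 2 | ∀ i < N, z i = 0}
  have hε : 0 ≤ ε := dist_nonneg.trans (hfN false _ fun _ _ => rfl)
  have hgm : Measurable fun q => f (hyperplaneConfig q) := hfm.comp measurable_hyperplaneConfig
  have hcm : Measurable fun q : (ℕ → ZMod 2) × ZMod 2 => f fun _ => decide (q.2 = 0) :=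
    hfm.comp ((measurable_of_countable fun η : ZMod 2 => fun (_ : ℕ →₀ ZMod 2) =>
      decide (η = 0)).comp measurable_snd)
  have hmean : ∫ q, f (fun _ => decide (q.2 = 0)) ∂P
      = (f (fun _ => false) + f (fun _ => true)) / 2 := by
    rw [integral_fun_snd (fun η => f fun _ => decide (η = 0)), PMF.integral_eq_sum]
    simp only [PMF.uniformOfFintype_apply, ZMod.card, Nat.cast_ofNat, ENNReal.toReal_inv,
      ENNReal.toReal_ofNat, smul_eq_mul]
    rw [probReal_univ, one_mul, ← Finset.mul_sum,
      show (Finset.univ : Finset (ZMod 2)) = {0, 1} by decide, Finset.sum_pair zero_ne_one]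
    simp only [decide_true, one_ne_zero, decide_false]
    ring
  have hG : MeasurableSet G := by
    simp only [G, Set.ofPred_forall]
    exact .iInter fun i => .iInter fun _ =>
      measurableSet_eq_fun (measurable_pi_apply i) measurable_const
  have hGc : P.real (Prod.fst ⁻¹' G)ᶜ = 1 - (1 - p) ^ N := by
    rw [probReal_compl_eq_one_sub (measurable_fst hG), ← Set.prod_univ, measureReal_def,
      Measure.prod_prod, hν.measure_vanishing_below, measure_univ, mul_one,
      ENNReal.toReal_ofReal (pow_nonneg (sub_nonneg.2 hν.le_one) N)]
  calc dist (∫ ω, f ω ∂hyperplaneLaw ν) ((f (fun _ => false) + f (fun _ => true)) / 2)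
      = ‖∫ q, (f (hyperplaneConfig q) - f (fun _ => decide (q.2 = 0))) ∂P‖ := by
        rw [hyperplaneLaw_eq_map, integral_map measurable_hyperplaneConfig.aemeasurable
          hfm.aestronglyMeasurable, integral_sub, hmean, dist_eq_norm]
        exacts [.of_bound hgm.aestronglyMeasurable C (ae_of_all _ fun q => hC _),
          .of_bound hcm.aestronglyMeasurable C (ae_of_all _ fun q => hC _)]
    _ ≤ ε * P.real (Prod.fst ⁻¹' G) + 2 * C * P.real (Prod.fst ⁻¹' G)ᶜ :=
        norm_integral_le_of_norm_le_const_on_of_norm_le_const (measurable_fst hG)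
          (hgm.sub hcm).aestronglyMeasurable
          (fun q hq => hfN _ _ (hyperplaneConfig_mem_constOnSubcube hq q.2))
          (fun q => (norm_sub_le _ _).trans
            (by linarith [hC (hyperplaneConfig q), hC fun _ => decide (q.2 = 0)]))
    _ ≤ ε + 2 * C * (1 - (1 - p) ^ N) := by
        rw [hGc]
        gcongr
        exact mul_le_of_le_one_right hε measureReal_le_one

end

/-- For every `N ≥ 1` and `ε > 0` there is `p > 0` for which the hyperplane law `μ_p`
gives mass at least `1/2 - ε` both to `{ω : ω|_{𝔽₂^N} ≡ 0}` and to
`{ω : ω|_{𝔽₂^N} ≡ 1}`; consequently `μ_p → ½δ_𝟘 + ½δ_𝟙` weakly as `p → 0⁺`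
(tested against all continuous functions for the product topology). -/
theorem hyperplaneLaw_approximates_half_dirac (ν : ℝ → Measure (ℕ → ZMod 2))
    (hν : ∀ p ∈ Set.Ioo (0 : ℝ) 1, IsBernoulliProduct p (ν p)) :
    (∀ N : ℕ, 1 ≤ N → ∀ ε : ℝ, 0 < ε → ∃ p ∈ Set.Ioo (0 : ℝ) 1,
      ENNReal.ofReal (1 / 2 - ε) ≤
        hyperplaneLaw (ν p) {ω | ∀ x : ℕ →₀ ZMod 2, (∀ i ≥ N, x i = 0) → ω x = false} ∧
      ENNReal.ofReal (1 / 2 - ε) ≤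
        hyperplaneLaw (ν p) {ω | ∀ x : ℕ →₀ ZMod 2, (∀ i ≥ N, x i = 0) → ω x = true}) ∧
    (∀ f : C((ℕ →₀ ZMod 2) → Bool, ℝ),
      Tendsto (fun p => ∫ ω, f ω ∂(hyperplaneLaw (ν p)))
        (nhdsWithin 0 (Set.Ioo (0 : ℝ) 1))
        (nhds ((f (fun _ => false) + f (fun _ => true)) / 2))) := by
  have := left_nhdsWithin_Ioo_neBot (zero_lt_one' ℝ)
  have hpow (N : ℕ) : Tendsto (fun p : ℝ => (1 - p) ^ N) (𝓝[Set.Ioo 0 1] 0) (𝓝 1) :=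
    tendsto_nhdsWithin_of_tendsto_nhds
      (((continuous_const.sub continuous_id).pow N).tendsto' 0 1 (by simp))
  refine ⟨fun N _ ε hε => ?_, fun f => Metric.tendsto_nhds.2 fun ε hε => ?_⟩
  · have hmass : ∀ᶠ p in 𝓝[Set.Ioo 0 1] 0, 1 / 2 - ε < (1 - p) ^ N / 2 :=
      ((hpow N).div_const 2).eventually (lt_mem_nhds (by linarith))
    obtain ⟨p, hp, hlt⟩ := (eventually_mem_nhdsWithin.and hmass).exists
    have hle := ENNReal.ofReal_le_ofReal hlt.le
    exact ⟨p, hp, hle.trans (ofReal_le_hyperplaneLaw_constOnSubcube (hν p hp) N false),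
      hle.trans (ofReal_le_hyperplaneLaw_constOnSubcube (hν p hp) N true)⟩
  · obtain ⟨C, hC⟩ : ∃ C, ∀ ω, ‖f ω‖ ≤ C :=
      ⟨_, (BoundedContinuousFunction.mkOfCompact f).norm_coe_le_norm⟩
    have hnear (b : Bool) : ∀ᶠ N in atTop,
        constOnSubcube N b ⊆ f ⁻¹' Metric.closedBall (f fun _ => b) (ε / 2) :=
      eventually_constOnSubcube_subset
        (f.continuous.continuousAt (Metric.closedBall_mem_nhds _ (half_pos hε)))
    obtain ⟨N, hfalse, htrue⟩ := ((hnear false).and (hnear true)).exists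
    have herr : Tendsto (fun p : ℝ => ε / 2 + 2 * C * (1 - (1 - p) ^ N)) (𝓝[Set.Ioo 0 1] 0)
        (𝓝 (ε / 2)) := by
      simpa using (((hpow N).const_sub 1).const_mul (2 * C)).const_add (ε / 2)
    filter_upwards [self_mem_nhdsWithin, herr.eventually (gt_mem_nhds (half_lt_self hε))]
      with p hp hlt
    exact (dist_integral_hyperplaneLaw_le (hν p hp) f.continuous.measurable hC
      fun b => b.rec hfalse htrue).trans_lt hlt
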